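/- Let H be a Hopf algebra over a commutative ring R and A a left H-module algebra possessing a trace one element, i.e., there exist t ∈ ∫_l and a ∈ A with t·a = 1. Then A is a projective left A#H-module; explicitly, the map β : A → A#H, x ↦ (x#t)(a#1), is left A#H-linear and splits the projection α : A#H → A, b#h ↦ b ε(h). -/

import Mathlib

universe u v w

open TensorProduct

/-- A left integral: `h * t = ε(h) • t` for all `h`. -/
def IsLeftIntegral (R : Type u) {H : Type v} [CommRing R] [Ring H] [HopfAlgebra R H]
    (t : H) : Prop :=
  ∀ h : H, h * t = Coalgebra.counit (R := R) h • t

section Smash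

variable (R : Type u) (H : Type v) (A : Type w) [CommRing R] [Ring H] [HopfAlgebra R H]
  [Ring A] [Algebra R A] [Module H A] [SMulCommClass H R A] [IsScalarTower R H A]

/-- The action of `h ∈ H` on `A` as an `R`-linear map. -/
noncomputable def actMap (x : H) : A →ₗ[R] A := DistribMulAction.toLinearMap R A x

/-- The `R`-linear map `a ↦ h • a` for fixed `a`. -/
noncomputable def smulBy (a : A) : H →ₗ[R] A where
  toFun h := h • a
  map_add' x y := add_smul x y a
  map_smul' r x := smul_assoc r x a

/-- Auxiliary bilinear map: `(x ⊗ y) ↦ ((b ⊗ g) ↦ (x • b) ⊗ (y * g))`. -/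
noncomputable def lmulAux : (H ⊗[R] H) →ₗ[R] (A ⊗[R] H) →ₗ[R] (A ⊗[R] H) :=
  TensorProduct.lift <| LinearMap.mk₂ R
    (fun x y => TensorProduct.map (actMap R H A x) (LinearMap.mulLeft R y))
    (fun x x' y => by
      ext b g
      change ((x + x') • b) ⊗ₜ[R] (y * g) = (x • b) ⊗ₜ[R] (y * g) + (x' • b) ⊗ₜ[R] (y * g)
      rw [add_smul, add_tmul])
    (fun r x y => by
      ext b g
      change ((r • x) • b) ⊗ₜ[R] (y * g) = (r • x • b) ⊗ₜ[R] (y * g)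
      rw [smul_assoc])
    (fun x y y' => by
      ext b g
      simp [add_mul, tmul_add])
    (fun x r y => by
      ext b g
      simp [LinearMap.mulLeft, smul_mul_assoc, tmul_smul])

/-- Left multiplication by `1 # h` on the smash product `A # H`:
`(1#h)(b#g) = Σ (h₁ • b) # (h₂ g)`. -/
noncomputable def leftSmash (h : H) : (A ⊗[R] H) →ₗ[R] (A ⊗[R] H) :=
  lmulAux R H A (Coalgebra.comul h)

/-- The multiplication of the smash product `A # H`:
`(a#h)(b#g) = Σ a(h₁ • b) # (h₂ g)`, as a bilinear map on `A ⊗[R] H`. -/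
noncomputable def smashMul : (A ⊗[R] H) →ₗ[R] (A ⊗[R] H) →ₗ[R] (A ⊗[R] H) :=
  TensorProduct.lift <| LinearMap.mk₂ R
    (fun a h => (TensorProduct.map (LinearMap.mulLeft R a) LinearMap.id) ∘ₗ leftSmash R H A h)
    (fun a a' h => by
      try dsimp only
      have key : TensorProduct.map (LinearMap.mulLeft R (a + a')) (LinearMap.id : H →ₗ[R] H) =
          TensorProduct.map (LinearMap.mulLeft R a) LinearMap.id +
            TensorProduct.map (LinearMap.mulLeft R a') LinearMap.id := by
        ext x y; simp [add_mul, add_tmul]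
      rw [key, LinearMap.add_comp])
    (fun r a h => by
      try dsimp only
      have key : TensorProduct.map (LinearMap.mulLeft R (r • a)) (LinearMap.id : H →ₗ[R] H) =
          r • TensorProduct.map (LinearMap.mulLeft R a) LinearMap.id := by
        ext x y; simp [smul_mul_assoc, smul_tmul']
      rw [key, LinearMap.smul_comp])
    (fun a h h' => by
      try dsimp only
      have key : leftSmash R H A (h + h') = leftSmash R H A h + leftSmash R H A h' := by
        simp [leftSmash, map_add]
      rw [key, LinearMap.comp_add])
    (fun r a h => by
      try dsimp only
      have key : leftSmash R H A (r • h) = r • leftSmash R H A h := by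
        simp [leftSmash, map_smul]
      rw [key, LinearMap.comp_smul])

/-- The projection `α : A # H → A`, `a # h ↦ a ε(h)`. -/
noncomputable def smashProj : (A ⊗[R] H) →ₗ[R] A :=
  (TensorProduct.rid R A).toLinearMap ∘ₗ LinearMap.lTensor A (Coalgebra.counit (R := R))

end Smash

section Helpers

variable (R : Type u) (H : Type v) (A : Type w) [CommRing R] [Ring H] [HopfAlgebra R H]
  [Ring A] [Algebra R A] [Module H A] [SMulCommClass H R A] [IsScalarTower R H A]

@[simp] lemma smulBy_apply (a : A) (h : H) : smulBy R H A a h = h • a := rfl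

/-- Left multiplication by `c` on the first tensor factor of `A ⊗ H`. -/
noncomputable def mulA (c : A) : (A ⊗[R] H) →ₗ[R] (A ⊗[R] H) :=
  TensorProduct.map (LinearMap.mulLeft R c) LinearMap.id

@[simp] lemma mulA_tmul (c u : A) (v : H) : mulA R H A c (u ⊗ₜ[R] v) = (c * u) ⊗ₜ[R] v := by
  simp [mulA]

@[simp] lemma mulA_zero (w : A ⊗[R] H) : mulA R H A 0 w = 0 := by
  induction w using TensorProduct.induction_on with
  | zero => simp
  | tmul u v => simp [zero_tmul]
  | add w w' hw hw' => simp [map_add, hw, hw']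

lemma lmulAux_tmul_tmul (p q : H) (u : A) (v : H) :
    lmulAux R H A (p ⊗ₜ[R] q) (u ⊗ₜ[R] v) = (p • u) ⊗ₜ[R] (q * v) := by
  simp [lmulAux, actMap]
  rfl

lemma smashMul_tmul (c : A) (k : H) (w : A ⊗[R] H) :
    smashMul R H A (c ⊗ₜ[R] k) w = mulA R H A c (lmulAux R H A (Coalgebra.comul k) w) := by
  simp [smashMul, leftSmash, mulA]

@[simp] lemma smashProj_tmul (c : A) (h : H) :
    smashProj R H A (c ⊗ₜ[R] h) = Coalgebra.counit (R := R) h • c := by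
  simp [smashProj]

lemma lmulAux_apply_tmul (u : A) (v : H) (c : H ⊗[R] H) :
    lmulAux R H A c (u ⊗ₜ[R] v) =
      TensorProduct.map (smulBy R H A u) (LinearMap.mulRight R v) c := by
  induction c using TensorProduct.induction_on with
  | zero => simp
  | tmul p q => simp [lmulAux_tmul_tmul]
  | add c c' hc hc' => simp [map_add, hc, hc']

lemma mulA_add (c c' : A) (w : A ⊗[R] H) :
    mulA R H A (c + c') w = mulA R H A c w + mulA R H A c' w := by
  induction w using TensorProduct.induction_on with
  | zero => simp
  | tmul u v => simp [add_mul, add_tmul]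
  | add w w' hw hw' => rw [map_add, map_add, map_add, hw, hw']; abel

lemma mulA_smul (r : R) (c : A) (w : A ⊗[R] H) :
    mulA R H A (r • c) w = r • mulA R H A c w := by
  induction w using TensorProduct.induction_on with
  | zero => simp
  | tmul u v => simp [smul_mul_assoc, smul_tmul']
  | add w w' hw hw' => rw [map_add, map_add, hw, hw', smul_add]

lemma mulA_mulA (b c : A) (w : A ⊗[R] H) :
    mulA R H A b (mulA R H A c w) = mulA R H A (b * c) w := by
  induction w using TensorProduct.induction_on with
  | zero => simp
  | tmul u v => simp [mul_assoc]
  | add w w' hw hw' => simp [map_add, hw, hw']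

lemma smashProj_mulA (b : A) (w : A ⊗[R] H) :
    smashProj R H A (mulA R H A b w) = b * smashProj R H A w := by
  induction w using TensorProduct.induction_on with
  | zero => simp
  | tmul u v => simp [mul_smul_comm]
  | add w w' hw hw' => simp [map_add, hw, hw', mul_add]

lemma lmulAux_mul (c d : H ⊗[R] H) (w : A ⊗[R] H) :
    lmulAux R H A c (lmulAux R H A d w) = lmulAux R H A (c * d) w := by
  induction c using TensorProduct.induction_on with
  | zero => simp
  | add c c' hc hc' => simp [map_add, add_mul, hc, hc']
  | tmul p q =>
    induction d using TensorProduct.induction_on with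
    | zero => simp
    | add d d' hd hd' => simp [map_add, mul_add, hd, hd']
    | tmul y z =>
      induction w using TensorProduct.induction_on with
      | zero => simp
      | add w w' hw hw' => simp [map_add, hw, hw']
      | tmul u v =>
        simp [lmulAux_tmul_tmul, Algebra.TensorProduct.tmul_mul_tmul, mul_smul, mul_assoc]

lemma lmulAux_comul_integral (t : H) (ht : IsLeftIntegral R t) (q : H) (w : A ⊗[R] H) :
    lmulAux R H A (Coalgebra.comul q) (lmulAux R H A (Coalgebra.comul t) w) =
      Coalgebra.counit (R := R) q • lmulAux R H A (Coalgebra.comul t) w := by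
  rw [lmulAux_mul, ← Bialgebra.comul_mul, ht q]
  simp [map_smul]

lemma smulBy_counit (u : A) (g : H) :
    g • u = (smulBy R H A u) ((TensorProduct.rid R H)
      ((Coalgebra.counit (R := R)).lTensor H (Coalgebra.comul g))) := by
  rw [Coalgebra.lTensor_counit_comul]
  simp

lemma smashProj_lmulAux (c : H ⊗[R] H) (u : A) :
    smashProj R H A (lmulAux R H A c (u ⊗ₜ[R] (1 : H))) =
      smulBy R H A u ((TensorProduct.rid R H)
        ((Coalgebra.counit (R := R)).lTensor H c)) := by
  induction c using TensorProduct.induction_on with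
  | zero => simp
  | tmul p q => simp [lmulAux_tmul_tmul, smul_assoc]
  | add c c' hc hc' => simp [map_add, hc, hc']

lemma smashProj_lmulAux_comul (g : H) (u : A) :
    smashProj R H A (lmulAux R H A (Coalgebra.comul g) (u ⊗ₜ[R] (1 : H))) = g • u := by
  rw [smashProj_lmulAux, ← smulBy_counit]

/-- `a ↦ mulA a` as a linear map. -/
noncomputable def mulAhom : A →ₗ[R] ((A ⊗[R] H) →ₗ[R] (A ⊗[R] H)) where
  toFun c := mulA R H A c
  map_add' c c' := by ext u v; simp [add_mul, add_tmul]
  map_smul' r c := by ext u v; simp [smul_mul_assoc, smul_tmul']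

/-- `(p ⊗ q) ↦ (w ↦ (p • x) · lmulAux (Δ q) w)`. -/
noncomputable def lam (x : A) : (H ⊗[R] H) →ₗ[R] (A ⊗[R] H) →ₗ[R] (A ⊗[R] H) :=
  TensorProduct.lift
    ((LinearMap.llcomp R (A ⊗[R] H) (A ⊗[R] H) (A ⊗[R] H) ∘ₗ mulAhom R H A ∘ₗ
      smulBy R H A x).compl₂ ((lmulAux R H A) ∘ₗ Coalgebra.comul))

lemma lam_tmul (x : A) (p q : H) (w : A ⊗[R] H) :
    lam R H A x (p ⊗ₜ[R] q) w =
      mulA R H A (p • x) (lmulAux R H A (Coalgebra.comul q) w) := by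
  simp [lam, mulAhom]

lemma lmulAux_comul_mulA
    (hact_mul : ∀ (h : H) (a b : A), h • (a * b) =
      LinearMap.mul' R A ((TensorProduct.map (smulBy R H A a) (smulBy R H A b))
        (Coalgebra.comul h)))
    (x : A) (g : H) (w : A ⊗[R] H) :
    lmulAux R H A (Coalgebra.comul g) (mulA R H A x w) =
      lam R H A x (Coalgebra.comul g) w := by
  induction w using TensorProduct.induction_on with
  | zero => simp
  | add w w' hw hw' => simp [map_add, hw, hw']
  | tmul u v =>
    set F : (H ⊗[R] H) →ₗ[R] A :=
      LinearMap.mul' R A ∘ₗ TensorProduct.map (smulBy R H A x) (smulBy R H A u) with hF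
    have hsx : smulBy R H A (x * u) = F ∘ₗ Coalgebra.comul := by
      ext h
      exact hact_mul h x u
    have h1 : ∀ c : H ⊗[R] H,
        TensorProduct.map (F ∘ₗ Coalgebra.comul) (LinearMap.mulRight R v) c =
          TensorProduct.map F (LinearMap.mulRight R v)
            ((Coalgebra.comul (R := R) (A := H)).rTensor H c) := by
      intro c
      induction c using TensorProduct.induction_on with
      | zero => simp
      | tmul p q => simp
      | add c c' hc hc' => simp only [map_add, hc, hc']
    have key : ∀ c : H ⊗[R] H,
        TensorProduct.map F (LinearMap.mulRight R v)
            ((TensorProduct.assoc R H H H).symm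
              ((Coalgebra.comul (R := R) (A := H)).lTensor H c)) =
          lam R H A x c (u ⊗ₜ[R] v) := by
      intro c
      induction c using TensorProduct.induction_on with
      | zero => simp
      | add c c' hc hc' => simp [map_add, hc, hc']
      | tmul p q =>
        rw [lam_tmul, lmulAux_apply_tmul]
        have sub : ∀ d : H ⊗[R] H,
            TensorProduct.map F (LinearMap.mulRight R v)
                ((TensorProduct.assoc R H H H).symm (p ⊗ₜ[R] d)) =
              mulA R H A (p • x)
                (TensorProduct.map (smulBy R H A u) (LinearMap.mulRight R v) d) := by
          intro d
          induction d using TensorProduct.induction_on with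
          | zero => simp
          | tmul q1 q2 => simp [hF]
          | add d d' hd hd' => simp [tmul_add, map_add, hd, hd']
        simpa [LinearMap.lTensor_tmul] using sub (Coalgebra.comul q)
    rw [mulA_tmul, lmulAux_apply_tmul, hsx, h1, ← Coalgebra.coassoc_symm_apply,
      key (Coalgebra.comul g)]

lemma lam_comul_integral (t : H) (ht : IsLeftIntegral R t) (x : A) (w : A ⊗[R] H)
    (c : H ⊗[R] H) :
    lam R H A x c (lmulAux R H A (Coalgebra.comul t) w) =
      mulA R H A ((smulBy R H A x) ((TensorProduct.rid R H)
          ((Coalgebra.counit (R := R)).lTensor H c)))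
        (lmulAux R H A (Coalgebra.comul t) w) := by
  induction c using TensorProduct.induction_on with
  | zero => simp
  | add c c' hc hc' => simp [map_add, hc, hc', mulA_add]
  | tmul p q =>
    rw [lam_tmul, lmulAux_comul_integral R H A t ht, map_smul]
    simp [smul_assoc, mulA_smul]

end Helpers


/-- If a left `H`-module algebra `A` has a trace one element (`t • a = 1` with `t` a left
integral), then `A` is a projective left `A#H`-module: explicitly, the map
`β : A → A#H`, `x ↦ (x#t)(a#1)`, is left `A#H`-linear (where `z ∈ A#H` acts on `A` by
`z • x = α(z·(x#1))`, `α : b#h ↦ b ε(h)` being the canonical projection) and `β` splits `α`. -/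
theorem traceOne_implies_projective (R : Type u) (H : Type v) (A : Type w) [CommRing R]
    [Ring H] [HopfAlgebra R H] [Ring A] [Algebra R A] [Module H A] [SMulCommClass H R A]
    [IsScalarTower R H A]
    -- `A` is a left `H`-module algebra:
    (hact_mul : ∀ (h : H) (a b : A), h • (a * b) =
      LinearMap.mul' R A ((TensorProduct.map (smulBy R H A a) (smulBy R H A b))
        (Coalgebra.comul h)))
    (hact_one : ∀ h : H, h • (1 : A) = Coalgebra.counit (R := R) h • (1 : A))
    -- trace one element:
    (t : H) (ht : IsLeftIntegral R t) (a : A) (hta : t • a = 1) :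
    -- `β : x ↦ (x#t)(a#1)` is `A#H`-linear and splits `α : A#H → A`:
    (∀ (z : A ⊗[R] H) (x : A),
        smashMul R H A (smashProj R H A (smashMul R H A z (x ⊗ₜ[R] (1 : H))) ⊗ₜ[R] t)
            (a ⊗ₜ[R] (1 : H)) =
          smashMul R H A z (smashMul R H A (x ⊗ₜ[R] t) (a ⊗ₜ[R] (1 : H)))) ∧
    (∀ x : A, smashProj R H A (smashMul R H A (x ⊗ₜ[R] t) (a ⊗ₜ[R] (1 : H))) = x) := by
  constructor
  · intro z x
    induction z using TensorProduct.induction_on with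
    | zero => simp [zero_tmul]
    | add z z' hz hz' =>
      simp only [map_add, LinearMap.add_apply] at *
      rw [add_tmul, map_add, LinearMap.add_apply, hz, hz']
    | tmul b g =>
      rw [smashMul_tmul R H A b g (x ⊗ₜ[R] (1 : H)), smashProj_mulA,
        smashProj_lmulAux_comul, smashMul_tmul, smashMul_tmul, smashMul_tmul,
        lmulAux_comul_mulA R H A hact_mul, lam_comul_integral R H A t ht,
        ← smulBy_counit, mulA_mulA]
  · intro x
    rw [smashMul_tmul, smashProj_mulA, smashProj_lmulAux_comul, hta, mul_one]
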